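/- Let n ≥ 1 be an integer. No valid configuration c ∈ Ω'_n contains either of the junction tiles j^{0,0,1,1} or j^{1,1,0,0}: for every c ∈ Ω'_n and every m ∈ ℤ^2, c(m) ∉ {j^{0,0,1,1}, j^{1,1,0,0}}. -/
import Mathlib


structure WangTile (C : Type*) where
  right : C
  top : C
  left : C
  bottom : C
deriving DecidableEq

abbrev Lbl : Type := ℤ × ℤ × ℤ

def Vn (n : ℤ) : Set Lbl :=
  {v | 0 ≤ v.1 ∧ v.1 ≤ v.2.1 ∧ v.2.1 ≤ 1 ∧ v.2.1 ≤ v.2.2 ∧ v.2.2 ≤ n + 1}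

def hatT {C : Type*} (t : WangTile C) : WangTile C :=
  ⟨t.top, t.right, t.bottom, t.left⟩

def whiteTiles (n : ℤ) : Set (WangTile Lbl) :=
  {t | ∃ i j : ℤ, 1 ≤ i ∧ i ≤ n ∧ 1 ≤ j ∧ j ≤ n ∧
    t = ⟨(1, 1, i + 1), (1, 1, j + 1), (1, 1, i), (1, 1, j)⟩}

def blueH (n : ℤ) : Set (WangTile Lbl) :=
  {t | ∃ i : ℤ, 0 ≤ i ∧ i ≤ n ∧ t = ⟨(0, 0, i + 1), (1, 1, 1), (0, 0, i), (1, 1, n)⟩}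

def greenH (n : ℤ) : Set (WangTile Lbl) :=
  {t | ∃ i : ℤ, 0 ≤ i ∧ i ≤ n ∧ t = ⟨(0, 1, i + 1), (1, 1, 1), (0, 0, i), (1, 1, n + 1)⟩}

def yellowH (n : ℤ) : Set (WangTile Lbl) :=
  {t | ∃ i : ℤ, 1 ≤ i ∧ i ≤ n ∧ t = ⟨(0, 1, i + 1), (1, 1, 2), (0, 1, i), (1, 1, n + 1)⟩}

def antiH (n : ℤ) : Set (WangTile Lbl) :=
  {t | ∃ i : ℤ, 1 ≤ i ∧ i ≤ n ∧ t = ⟨(0, 0, i + 1), (1, 1, 2), (0, 1, i), (1, 1, n)⟩}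

def junctionTile (n k l r s : ℤ) : WangTile Lbl :=
  ⟨(0, k, l), (0, r, s), (0, s, r + n), (0, l, k + n)⟩

def jPairs : Set (ℤ × ℤ) := {(0, 0), (0, 1), (1, 1)}

def junctions (n : ℤ) : Set (WangTile Lbl) :=
  {t | ∃ k l r s : ℤ, (k, l) ∈ jPairs ∧ (r, s) ∈ jPairs ∧ t = junctionTile n k l r s}

def Text (n : ℤ) : Set (WangTile Lbl) :=
  whiteTiles n ∪ blueH n ∪ greenH n ∪ yellowH n ∪ antiH n ∪
    hatT '' blueH n ∪ hatT '' greenH n ∪ hatT '' yellowH n ∪ hatT '' antiH n ∪ junctions n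

def Dset (n : ℤ) : Set (WangTile Lbl) :=
  {(⟨(0, 0, n + 1), (1, 1, 1), (0, 0, n), (1, 1, n)⟩ : WangTile Lbl),
    hatT (⟨(0, 0, n + 1), (1, 1, 1), (0, 0, n), (1, 1, n)⟩ : WangTile Lbl),
    junctionTile n 0 0 1 1, junctionTile n 1 1 0 0}

def Tmet (n : ℤ) : Set (WangTile Lbl) :=
  Text n \ (antiH n ∪ hatT '' antiH n ∪ Dset n)

def ValidConfig {C : Type*} (T : Set (WangTile C)) (x : ℤ × ℤ → WangTile C) : Prop :=
  (∀ m, x m ∈ T) ∧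
    (∀ m : ℤ × ℤ, (x m).right = (x (m.1 + 1, m.2)).left) ∧
    (∀ m : ℤ × ℤ, (x m).top = (x (m.1, m.2 + 1)).bottom)

def ValidPattern {C : Type*} (T : Set (WangTile C)) (w h : ℕ) (p : ℕ → ℕ → WangTile C) : Prop :=
  (∀ i j, i < w → j < h → p i j ∈ T) ∧
    (∀ i j, i + 1 < w → j < h → (p i j).right = (p (i + 1) j).left) ∧
    (∀ i j, i < w → j + 1 < h → (p i j).top = (p i (j + 1)).bottom)

def bottomWord {C : Type*} (w : ℕ) (p : ℕ → ℕ → WangTile C) : List C :=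
  (List.range w).map fun i => (p i 0).bottom

def topWord {C : Type*} (w h : ℕ) (p : ℕ → ℕ → WangTile C) : List C :=
  (List.range w).map fun i => (p i (h - 1)).top

def leftWord {C : Type*} (h : ℕ) (p : ℕ → ℕ → WangTile C) : List C :=
  (List.range h).map fun j => (p 0 j).left

def rightWord {C : Type*} (w h : ℕ) (p : ℕ → ℕ → WangTile C) : List C :=
  (List.range h).map fun j => (p (w - 1) j).right

def tau (n : ℤ) (v : Lbl) : List Lbl :=
  if v.1 = v.2.2 then
    (0, v.1 - v.2.1 + 1, n + 1) :: List.replicate (n - v.2.2).toNat (1, 1, n + 1)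
  else
    (0, v.1 - v.2.1 + 1, n) ::
      (List.replicate (v.2.2 - v.1 - 1).toNat (1, 1, n) ++
        List.replicate (n + 1 - v.2.2).toNat (1, 1, n + 1))

lemma mem_Text_cases {n : ℤ} {t : WangTile Lbl} (ht : t ∈ Text n) :
    (∃ i j : ℤ, 1 ≤ i ∧ i ≤ n ∧ 1 ≤ j ∧ j ≤ n ∧
      t = ⟨(1, 1, i + 1), (1, 1, j + 1), (1, 1, i), (1, 1, j)⟩) ∨
    (∃ i : ℤ, 0 ≤ i ∧ i ≤ n ∧ t = ⟨(0, 0, i + 1), (1, 1, 1), (0, 0, i), (1, 1, n)⟩) ∨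
    (∃ i : ℤ, 0 ≤ i ∧ i ≤ n ∧ t = ⟨(0, 1, i + 1), (1, 1, 1), (0, 0, i), (1, 1, n + 1)⟩) ∨
    (∃ i : ℤ, 1 ≤ i ∧ i ≤ n ∧ t = ⟨(0, 1, i + 1), (1, 1, 2), (0, 1, i), (1, 1, n + 1)⟩) ∨
    (∃ i : ℤ, 1 ≤ i ∧ i ≤ n ∧ t = ⟨(0, 0, i + 1), (1, 1, 2), (0, 1, i), (1, 1, n)⟩) ∨
    (∃ i : ℤ, 0 ≤ i ∧ i ≤ n ∧ t = ⟨(1, 1, 1), (0, 0, i + 1), (1, 1, n), (0, 0, i)⟩) ∨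
    (∃ i : ℤ, 0 ≤ i ∧ i ≤ n ∧ t = ⟨(1, 1, 1), (0, 1, i + 1), (1, 1, n + 1), (0, 0, i)⟩) ∨
    (∃ i : ℤ, 1 ≤ i ∧ i ≤ n ∧ t = ⟨(1, 1, 2), (0, 1, i + 1), (1, 1, n + 1), (0, 1, i)⟩) ∨
    (∃ i : ℤ, 1 ≤ i ∧ i ≤ n ∧ t = ⟨(1, 1, 2), (0, 0, i + 1), (1, 1, n), (0, 1, i)⟩) ∨
    (∃ k l r s : ℤ,
      ((k = 0 ∧ l = 0) ∨ (k = 0 ∧ l = 1) ∨ (k = 1 ∧ l = 1)) ∧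
      ((r = 0 ∧ s = 0) ∨ (r = 0 ∧ s = 1) ∨ (r = 1 ∧ s = 1)) ∧
      t = ⟨(0, k, l), (0, r, s), (0, s, r + n), (0, l, k + n)⟩) := by
  rcases ht with ((((((((hW | hB) | hG) | hY) | hA) | hhB) | hhG) | hhY) | hhA) | hJ
  · exact Or.inl hW
  · exact Or.inr (Or.inl hB)
  · exact Or.inr (Or.inr (Or.inl hG))
  · exact Or.inr (Or.inr (Or.inr (Or.inl hY)))
  · exact Or.inr (Or.inr (Or.inr (Or.inr (Or.inl hA))))
  · obtain ⟨t0, ⟨i, h1, h2, rfl⟩, rfl⟩ := hhB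
    exact Or.inr (Or.inr (Or.inr (Or.inr (Or.inr (Or.inl ⟨i, h1, h2, rfl⟩)))))
  · obtain ⟨t0, ⟨i, h1, h2, rfl⟩, rfl⟩ := hhG
    exact Or.inr (Or.inr (Or.inr (Or.inr (Or.inr (Or.inr (Or.inl ⟨i, h1, h2, rfl⟩))))))
  · obtain ⟨t0, ⟨i, h1, h2, rfl⟩, rfl⟩ := hhY
    exact Or.inr (Or.inr (Or.inr (Or.inr (Or.inr (Or.inr (Or.inr (Or.inl ⟨i, h1, h2, rfl⟩)))))))
  · obtain ⟨t0, ⟨i, h1, h2, rfl⟩, rfl⟩ := hhA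
    exact Or.inr (Or.inr (Or.inr (Or.inr (Or.inr (Or.inr (Or.inr (Or.inr (Or.inl ⟨i, h1, h2, rfl⟩))))))))
  · obtain ⟨k, l, r, s, hkl, hrs, rfl⟩ := hJ
    simp only [jPairs, Set.mem_insert_iff, Set.mem_singleton_iff, Prod.mk.injEq] at hkl hrs
    exact Or.inr (Or.inr (Or.inr (Or.inr (Or.inr (Or.inr (Or.inr (Or.inr (Or.inr
      ⟨k, l, r, s, hkl, hrs, rfl⟩))))))))

section
variable {n : ℤ} {t : WangTile Lbl}

lemma rowStep (hn : 1 ≤ n) (ht : t ∈ Text n) {d m : ℤ}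
    (h : t.left = (0, d, m)) (h0 : 0 ≤ m) (h1 : m ≤ n - 1) :
    (∃ d', t.right = (0, d', m + 1)) ∧ (t.top = (1, 1, 1) ∨ t.top = (1, 1, 2)) := by
  rcases mem_Text_cases ht with ⟨i, j, hi1, hi2, hj1, hj2, rfl⟩ | ⟨i, hi1, hi2, rfl⟩ |
    ⟨i, hi1, hi2, rfl⟩ | ⟨i, hi1, hi2, rfl⟩ | ⟨i, hi1, hi2, rfl⟩ | ⟨i, hi1, hi2, rfl⟩ |
    ⟨i, hi1, hi2, rfl⟩ | ⟨i, hi1, hi2, rfl⟩ | ⟨i, hi1, hi2, rfl⟩ |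
    ⟨k, l, r, s, hkl, hrs, rfl⟩
  all_goals try rcases hrs with ⟨rfl, rfl⟩ | ⟨rfl, rfl⟩ | ⟨rfl, rfl⟩
  all_goals try rcases hkl with ⟨rfl, rfl⟩ | ⟨rfl, rfl⟩ | ⟨rfl, rfl⟩
  all_goals try simp only [Prod.mk.injEq, true_and, and_true, true_or, or_true,
      false_and, and_false, false_or, or_false] at *
  all_goals first | omega | exact ⟨0, by omega⟩ | exact ⟨1, by omega⟩

lemma colStep (hn : 1 ≤ n) (ht : t ∈ Text n) {d m : ℤ}
    (h : t.bottom = (0, d, m)) (h0 : 0 ≤ m) (h1 : m ≤ n - 1) :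
    (∃ d', t.top = (0, d', m + 1)) ∧ (t.right = (1, 1, 1) ∨ t.right = (1, 1, 2)) := by
  rcases mem_Text_cases ht with ⟨i, j, hi1, hi2, hj1, hj2, rfl⟩ | ⟨i, hi1, hi2, rfl⟩ |
    ⟨i, hi1, hi2, rfl⟩ | ⟨i, hi1, hi2, rfl⟩ | ⟨i, hi1, hi2, rfl⟩ | ⟨i, hi1, hi2, rfl⟩ |
    ⟨i, hi1, hi2, rfl⟩ | ⟨i, hi1, hi2, rfl⟩ | ⟨i, hi1, hi2, rfl⟩ |
    ⟨k, l, r, s, hkl, hrs, rfl⟩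
  all_goals try rcases hrs with ⟨rfl, rfl⟩ | ⟨rfl, rfl⟩ | ⟨rfl, rfl⟩
  all_goals try rcases hkl with ⟨rfl, rfl⟩ | ⟨rfl, rfl⟩ | ⟨rfl, rfl⟩
  all_goals try simp only [Prod.mk.injEq, true_and, and_true, true_or, or_true,
      false_and, and_false, false_or, or_false] at *
  all_goals first | omega | exact ⟨0, by omega⟩ | exact ⟨1, by omega⟩

lemma whiteStep (hn : 1 ≤ n) (ht : t ∈ Text n) {a b : ℤ}
    (hl : t.left = (1, 1, a)) (hb : t.bottom = (1, 1, b)) :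
    a ≤ n ∧ b ≤ n ∧ t.right = (1, 1, a + 1) ∧ t.top = (1, 1, b + 1) := by
  rcases mem_Text_cases ht with ⟨i, j, hi1, hi2, hj1, hj2, rfl⟩ | ⟨i, hi1, hi2, rfl⟩ |
    ⟨i, hi1, hi2, rfl⟩ | ⟨i, hi1, hi2, rfl⟩ | ⟨i, hi1, hi2, rfl⟩ | ⟨i, hi1, hi2, rfl⟩ |
    ⟨i, hi1, hi2, rfl⟩ | ⟨i, hi1, hi2, rfl⟩ | ⟨i, hi1, hi2, rfl⟩ |
    ⟨k, l, r, s, hkl, hrs, rfl⟩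
  all_goals try rcases hrs with ⟨rfl, rfl⟩ | ⟨rfl, rfl⟩ | ⟨rfl, rfl⟩
  all_goals try rcases hkl with ⟨rfl, rfl⟩ | ⟨rfl, rfl⟩ | ⟨rfl, rfl⟩
  all_goals try simp only [Prod.mk.injEq, true_and, and_true, true_or, or_true,
      false_and, and_false, false_or, or_false] at *
  all_goals first | omega | exact ⟨0, by omega⟩ | exact ⟨1, by omega⟩

lemma bot011 (hn : 1 ≤ n) (ht : t ∈ Text n) (h : t.bottom = (0, 1, 1)) :
    t.right = (1, 1, 2) ∨ (n = 1 ∧ t.right = (0, 0, 1)) := by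
  rcases mem_Text_cases ht with ⟨i, j, hi1, hi2, hj1, hj2, rfl⟩ | ⟨i, hi1, hi2, rfl⟩ |
    ⟨i, hi1, hi2, rfl⟩ | ⟨i, hi1, hi2, rfl⟩ | ⟨i, hi1, hi2, rfl⟩ | ⟨i, hi1, hi2, rfl⟩ |
    ⟨i, hi1, hi2, rfl⟩ | ⟨i, hi1, hi2, rfl⟩ | ⟨i, hi1, hi2, rfl⟩ |
    ⟨k, l, r, s, hkl, hrs, rfl⟩
  all_goals try rcases hrs with ⟨rfl, rfl⟩ | ⟨rfl, rfl⟩ | ⟨rfl, rfl⟩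
  all_goals try rcases hkl with ⟨rfl, rfl⟩ | ⟨rfl, rfl⟩ | ⟨rfl, rfl⟩
  all_goals try simp only [Prod.mk.injEq, true_and, and_true, true_or, or_true,
      false_and, and_false, false_or, or_false] at *
  all_goals first | omega | exact ⟨0, by omega⟩ | exact ⟨1, by omega⟩

lemma left011 (hn : 1 ≤ n) (ht : t ∈ Text n) (h : t.left = (0, 1, 1)) :
    t.top = (1, 1, 2) ∨ (n = 1 ∧ t.top = (0, 0, 1)) := by
  rcases mem_Text_cases ht with ⟨i, j, hi1, hi2, hj1, hj2, rfl⟩ | ⟨i, hi1, hi2, rfl⟩ |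
    ⟨i, hi1, hi2, rfl⟩ | ⟨i, hi1, hi2, rfl⟩ | ⟨i, hi1, hi2, rfl⟩ | ⟨i, hi1, hi2, rfl⟩ |
    ⟨i, hi1, hi2, rfl⟩ | ⟨i, hi1, hi2, rfl⟩ | ⟨i, hi1, hi2, rfl⟩ |
    ⟨k, l, r, s, hkl, hrs, rfl⟩
  all_goals try rcases hrs with ⟨rfl, rfl⟩ | ⟨rfl, rfl⟩ | ⟨rfl, rfl⟩
  all_goals try rcases hkl with ⟨rfl, rfl⟩ | ⟨rfl, rfl⟩ | ⟨rfl, rfl⟩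
  all_goals try simp only [Prod.mk.injEq, true_and, and_true, true_or, or_true,
      false_and, and_false, false_or, or_false] at *
  all_goals first | omega | exact ⟨0, by omega⟩ | exact ⟨1, by omega⟩

lemma bot000 (hn : 1 ≤ n) (ht : t ∈ Text n) (h : t.bottom = (0, 0, 0)) :
    t.right = (1, 1, 1) := by
  rcases mem_Text_cases ht with ⟨i, j, hi1, hi2, hj1, hj2, rfl⟩ | ⟨i, hi1, hi2, rfl⟩ |
    ⟨i, hi1, hi2, rfl⟩ | ⟨i, hi1, hi2, rfl⟩ | ⟨i, hi1, hi2, rfl⟩ | ⟨i, hi1, hi2, rfl⟩ |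
    ⟨i, hi1, hi2, rfl⟩ | ⟨i, hi1, hi2, rfl⟩ | ⟨i, hi1, hi2, rfl⟩ |
    ⟨k, l, r, s, hkl, hrs, rfl⟩
  all_goals try rcases hrs with ⟨rfl, rfl⟩ | ⟨rfl, rfl⟩ | ⟨rfl, rfl⟩
  all_goals try rcases hkl with ⟨rfl, rfl⟩ | ⟨rfl, rfl⟩ | ⟨rfl, rfl⟩
  all_goals try simp only [Prod.mk.injEq, true_and, and_true, true_or, or_true,
      false_and, and_false, false_or, or_false] at *
  all_goals first | omega | exact ⟨0, by omega⟩ | exact ⟨1, by omega⟩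

lemma left000 (hn : 1 ≤ n) (ht : t ∈ Text n) (h : t.left = (0, 0, 0)) :
    t.top = (1, 1, 1) := by
  rcases mem_Text_cases ht with ⟨i, j, hi1, hi2, hj1, hj2, rfl⟩ | ⟨i, hi1, hi2, rfl⟩ |
    ⟨i, hi1, hi2, rfl⟩ | ⟨i, hi1, hi2, rfl⟩ | ⟨i, hi1, hi2, rfl⟩ | ⟨i, hi1, hi2, rfl⟩ |
    ⟨i, hi1, hi2, rfl⟩ | ⟨i, hi1, hi2, rfl⟩ | ⟨i, hi1, hi2, rfl⟩ |
    ⟨k, l, r, s, hkl, hrs, rfl⟩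
  all_goals try rcases hrs with ⟨rfl, rfl⟩ | ⟨rfl, rfl⟩ | ⟨rfl, rfl⟩
  all_goals try rcases hkl with ⟨rfl, rfl⟩ | ⟨rfl, rfl⟩ | ⟨rfl, rfl⟩
  all_goals try simp only [Prod.mk.injEq, true_and, and_true, true_or, or_true,
      false_and, and_false, false_or, or_false] at *
  all_goals first | omega | exact ⟨0, by omega⟩ | exact ⟨1, by omega⟩

lemma left001 (hn : n = 1) (ht : t ∈ Text n) (hl : t.left = (0, 0, 1))
    (hb : t.bottom = (1, 1, 1)) : t.right = (0, 0, 2) := by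
  subst hn
  rcases mem_Text_cases ht with ⟨i, j, hi1, hi2, hj1, hj2, rfl⟩ | ⟨i, hi1, hi2, rfl⟩ |
    ⟨i, hi1, hi2, rfl⟩ | ⟨i, hi1, hi2, rfl⟩ | ⟨i, hi1, hi2, rfl⟩ | ⟨i, hi1, hi2, rfl⟩ |
    ⟨i, hi1, hi2, rfl⟩ | ⟨i, hi1, hi2, rfl⟩ | ⟨i, hi1, hi2, rfl⟩ |
    ⟨k, l, r, s, hkl, hrs, rfl⟩
  all_goals try rcases hrs with ⟨rfl, rfl⟩ | ⟨rfl, rfl⟩ | ⟨rfl, rfl⟩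
  all_goals try rcases hkl with ⟨rfl, rfl⟩ | ⟨rfl, rfl⟩ | ⟨rfl, rfl⟩
  all_goals try simp only [Prod.mk.injEq, true_and, and_true, true_or, or_true,
      false_and, and_false, false_or, or_false] at *
  all_goals first | omega | exact ⟨0, by omega⟩ | exact ⟨1, by omega⟩

lemma left002 (hn : n = 1) (ht : t ∈ Text n) (hl : t.left = (0, 0, 2)) : False := by
  subst hn
  rcases mem_Text_cases ht with ⟨i, j, hi1, hi2, hj1, hj2, rfl⟩ | ⟨i, hi1, hi2, rfl⟩ |
    ⟨i, hi1, hi2, rfl⟩ | ⟨i, hi1, hi2, rfl⟩ | ⟨i, hi1, hi2, rfl⟩ | ⟨i, hi1, hi2, rfl⟩ |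
    ⟨i, hi1, hi2, rfl⟩ | ⟨i, hi1, hi2, rfl⟩ | ⟨i, hi1, hi2, rfl⟩ |
    ⟨k, l, r, s, hkl, hrs, rfl⟩
  all_goals try rcases hrs with ⟨rfl, rfl⟩ | ⟨rfl, rfl⟩ | ⟨rfl, rfl⟩
  all_goals try rcases hkl with ⟨rfl, rfl⟩ | ⟨rfl, rfl⟩ | ⟨rfl, rfl⟩
  all_goals try simp only [Prod.mk.injEq, true_and, and_true, true_or, or_true,
      false_and, and_false, false_or, or_false] at *
  all_goals first | omega | exact ⟨0, by omega⟩ | exact ⟨1, by omega⟩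

lemma bot001 (hn : n = 1) (ht : t ∈ Text n) (hb : t.bottom = (0, 0, 1))
    (hl : t.left = (1, 1, 1)) : t.top = (0, 0, 2) := by
  subst hn
  rcases mem_Text_cases ht with ⟨i, j, hi1, hi2, hj1, hj2, rfl⟩ | ⟨i, hi1, hi2, rfl⟩ |
    ⟨i, hi1, hi2, rfl⟩ | ⟨i, hi1, hi2, rfl⟩ | ⟨i, hi1, hi2, rfl⟩ | ⟨i, hi1, hi2, rfl⟩ |
    ⟨i, hi1, hi2, rfl⟩ | ⟨i, hi1, hi2, rfl⟩ | ⟨i, hi1, hi2, rfl⟩ |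
    ⟨k, l, r, s, hkl, hrs, rfl⟩
  all_goals try rcases hrs with ⟨rfl, rfl⟩ | ⟨rfl, rfl⟩ | ⟨rfl, rfl⟩
  all_goals try rcases hkl with ⟨rfl, rfl⟩ | ⟨rfl, rfl⟩ | ⟨rfl, rfl⟩
  all_goals try simp only [Prod.mk.injEq, true_and, and_true, true_or, or_true,
      false_and, and_false, false_or, or_false] at *
  all_goals first | omega | exact ⟨0, by omega⟩ | exact ⟨1, by omega⟩

lemma bot002 (hn : n = 1) (ht : t ∈ Text n) (hb : t.bottom = (0, 0, 2)) : False := by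
  subst hn
  rcases mem_Text_cases ht with ⟨i, j, hi1, hi2, hj1, hj2, rfl⟩ | ⟨i, hi1, hi2, rfl⟩ |
    ⟨i, hi1, hi2, rfl⟩ | ⟨i, hi1, hi2, rfl⟩ | ⟨i, hi1, hi2, rfl⟩ | ⟨i, hi1, hi2, rfl⟩ |
    ⟨i, hi1, hi2, rfl⟩ | ⟨i, hi1, hi2, rfl⟩ | ⟨i, hi1, hi2, rfl⟩ |
    ⟨k, l, r, s, hkl, hrs, rfl⟩
  all_goals try rcases hrs with ⟨rfl, rfl⟩ | ⟨rfl, rfl⟩ | ⟨rfl, rfl⟩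
  all_goals try rcases hkl with ⟨rfl, rfl⟩ | ⟨rfl, rfl⟩ | ⟨rfl, rfl⟩
  all_goals try simp only [Prod.mk.injEq, true_and, and_true, true_or, or_true,
      false_and, and_false, false_or, or_false] at *
  all_goals first | omega | exact ⟨0, by omega⟩ | exact ⟨1, by omega⟩

end

/-- no valid configuration over `T'_n` contains the junction tiles
`j^{0,0,1,1}` or `j^{1,1,0,0}`. -/
theorem stmt13 (n : ℤ) (hn : 1 ≤ n) (c : ℤ × ℤ → WangTile Lbl)
    (hc : ValidConfig (Text n) c) :
    ∀ m : ℤ × ℤ, c m ∉ ({junctionTile n 0 0 1 1, junctionTile n 1 1 0 0} :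
      Set (WangTile Lbl)) := by
  obtain ⟨hmem, hH, hV⟩ := hc
  intro m hmm
  simp only [Set.mem_insert_iff, Set.mem_singleton_iff] at hmm
  rcases hmm with hcm | hcm
  · -- c m = j^{0,0,1,1}
    have hUb : (c (m.1, m.2 + 1)).bottom = (0, 1, 1) := by rw [← hV m, hcm]; rfl
    rcases bot011 hn (hmem _) hUb with hUr | ⟨hn1, hUr⟩
    · -- main case
      have claimA : ∀ x : ℤ, 0 ≤ x → x ≤ n - 1 →
          ∃ d, (c (m.1 + 1 + x, m.2)).left = (0, d, x) := by
        refine Int.le_induction ?_ ?_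
        · intro _
          refine ⟨0, ?_⟩
          rw [show (m.1 + 1 + 0 : ℤ) = m.1 + 1 from by ring, ← hH m, hcm]; rfl
        · intro x hx ih hxn
          obtain ⟨d, hd⟩ := ih (by omega)
          obtain ⟨⟨d', hd'⟩, -⟩ := rowStep hn (hmem _) hd hx (by omega)
          refine ⟨d', ?_⟩
          rw [show m.1 + 1 + (x + 1) = m.1 + 1 + x + 1 from by ring,
            ← hH (m.1 + 1 + x, m.2)]
          exact hd'
      have claimTop : ∀ x : ℤ, 0 ≤ x → x ≤ n - 1 →
          (c (m.1 + 1 + x, m.2)).top = (1, 1, 1) ∨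
            (c (m.1 + 1 + x, m.2)).top = (1, 1, 2) := by
        intro x hx hxn
        obtain ⟨d, hd⟩ := claimA x hx hxn
        exact (rowStep hn (hmem _) hd hx hxn).2
      have claimB : ∀ x : ℤ, 0 ≤ x → x ≤ n - 1 →
          (c (m.1 + 1 + x, m.2 + 1)).left = (1, 1, x + 2) ∧
            ∃ b, (c (m.1 + 1 + x, m.2 + 1)).bottom = (1, 1, b) := by
        refine Int.le_induction ?_ ?_
        · intro h0n
          rw [show (m.1 + 1 + 0 : ℤ) = m.1 + 1 from by ring]
          constructor
          · rw [← hH (m.1, m.2 + 1), hUr]; norm_num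
          · rcases claimTop 0 le_rfl h0n with h | h
            · exact ⟨1, by
                rw [show (m.1 + 1 : ℤ) = m.1 + 1 + 0 from by ring, ← hV (m.1 + 1 + 0, m.2), h]⟩
            · exact ⟨2, by
                rw [show (m.1 + 1 : ℤ) = m.1 + 1 + 0 from by ring, ← hV (m.1 + 1 + 0, m.2), h]⟩
        · intro x hx ih hxn
          obtain ⟨hl, b, hb⟩ := ih (by omega)
          obtain ⟨-, -, hr, -⟩ := whiteStep hn (hmem _) hl hb
          constructor
          · rw [show m.1 + 1 + (x + 1) = m.1 + 1 + x + 1 from by ring,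
              ← hH (m.1 + 1 + x, m.2 + 1), hr]
            simp only [Prod.mk.injEq, true_and, and_true]
            omega
          · rcases claimTop (x + 1) (by omega) hxn with h | h
            · exact ⟨1, by rw [← hV (m.1 + 1 + (x + 1), m.2), h]⟩
            · exact ⟨2, by rw [← hV (m.1 + 1 + (x + 1), m.2), h]⟩
      obtain ⟨hl, b, hb⟩ := claimB (n - 1) (by omega) (by omega)
      obtain ⟨ha, -, -, -⟩ := whiteStep hn (hmem _) hl hb
      omega
    · -- n = 1, column tile above is a junction
      have hRl : (c (m.1 + 1, m.2)).left = (0, 0, 0) := by rw [← hH m, hcm]; rfl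
      have hRt := left000 hn (hmem _) hRl
      have hXl : (c (m.1 + 1, m.2 + 1)).left = (0, 0, 1) := by
        rw [← hH (m.1, m.2 + 1), hUr]
      have hXb : (c (m.1 + 1, m.2 + 1)).bottom = (1, 1, 1) := by
        rw [← hV (m.1 + 1, m.2), hRt]
      have hXr := left001 hn1 (hmem _) hXl hXb
      have hYl : (c (m.1 + 1 + 1, m.2 + 1)).left = (0, 0, 2) := by
        rw [← hH (m.1 + 1, m.2 + 1), hXr]
      exact left002 hn1 (hmem _) hYl
  · -- c m = j^{1,1,0,0}
    have hUb : (c (m.1, m.2 + 1)).bottom = (0, 0, 0) := by rw [← hV m, hcm]; rfl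
    have hUright := bot000 hn (hmem _) hUb
    have hRl : (c (m.1 + 1, m.2)).left = (0, 1, 1) := by rw [← hH m, hcm]; rfl
    rcases left011 hn (hmem _) hRl with hRt | ⟨hn1, hRt⟩
    · have claimA : ∀ y : ℤ, 0 ≤ y → y ≤ n - 1 →
          ∃ d, (c (m.1, m.2 + 1 + y)).bottom = (0, d, y) := by
        refine Int.le_induction ?_ ?_
        · intro _
          refine ⟨0, ?_⟩
          rw [show (m.2 + 1 + 0 : ℤ) = m.2 + 1 from by ring, ← hV m, hcm]; rfl
        · intro y hy ih hyn
          obtain ⟨d, hd⟩ := ih (by omega)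
          obtain ⟨⟨d', hd'⟩, -⟩ := colStep hn (hmem _) hd hy (by omega)
          refine ⟨d', ?_⟩
          rw [show m.2 + 1 + (y + 1) = m.2 + 1 + y + 1 from by ring,
            ← hV (m.1, m.2 + 1 + y)]
          exact hd'
      have claimRight : ∀ y : ℤ, 0 ≤ y → y ≤ n - 1 →
          (c (m.1, m.2 + 1 + y)).right = (1, 1, 1) ∨
            (c (m.1, m.2 + 1 + y)).right = (1, 1, 2) := by
        intro y hy hyn
        obtain ⟨d, hd⟩ := claimA y hy hyn
        exact (colStep hn (hmem _) hd hy hyn).2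
      have claimB : ∀ y : ℤ, 0 ≤ y → y ≤ n - 1 →
          (c (m.1 + 1, m.2 + 1 + y)).bottom = (1, 1, y + 2) ∧
            ∃ a, (c (m.1 + 1, m.2 + 1 + y)).left = (1, 1, a) := by
        refine Int.le_induction ?_ ?_
        · intro h0n
          rw [show (m.2 + 1 + 0 : ℤ) = m.2 + 1 from by ring]
          constructor
          · rw [← hV (m.1 + 1, m.2), hRt]; norm_num
          · exact ⟨1, by rw [← hH (m.1, m.2 + 1), hUright]⟩
        · intro y hy ih hyn
          obtain ⟨hb, a, hl⟩ := ih (by omega)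
          obtain ⟨-, -, -, ht⟩ := whiteStep hn (hmem _) hl hb
          constructor
          · rw [show m.2 + 1 + (y + 1) = m.2 + 1 + y + 1 from by ring,
              ← hV (m.1 + 1, m.2 + 1 + y), ht]
            simp only [Prod.mk.injEq, true_and, and_true]
            omega
          · rcases claimRight (y + 1) (by omega) hyn with h | h
            · exact ⟨1, by rw [← hH (m.1, m.2 + 1 + (y + 1)), h]⟩
            · exact ⟨2, by rw [← hH (m.1, m.2 + 1 + (y + 1)), h]⟩
      obtain ⟨hb, a, hl⟩ := claimB (n - 1) (by omega) (by omega)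
      obtain ⟨-, hbn, -, -⟩ := whiteStep hn (hmem _) hl hb
      omega
    · have hXb : (c (m.1 + 1, m.2 + 1)).bottom = (0, 0, 1) := by
        rw [← hV (m.1 + 1, m.2), hRt]
      have hXl : (c (m.1 + 1, m.2 + 1)).left = (1, 1, 1) := by
        rw [← hH (m.1, m.2 + 1), hUright]
      have hXt := bot001 hn1 (hmem _) hXb hXl
      have hYb : (c (m.1 + 1, m.2 + 1 + 1)).bottom = (0, 0, 2) := by
        rw [← hV (m.1 + 1, m.2 + 1), hXt]
      exact bot002 hn1 (hmem _) hYb
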